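/- If T is a symmetric 2-tensor satisfying Pol(T)|_{Σ₀} = 0 and Pol(ℒ₀ T) = 0 everywhere, where ℒ₀ = −2 D_{L₀} + (□_{g₀}u₀) and the background null frame satisfies the structure equations D_{L₀}L₀ = 0, D_{L₀}L̄₀ = 2ζ̄_A e_A, D_{L₀}e_A = ζ̄_A L₀ + ∇̸_{L₀} e_A (with g₀(∇̸_{L₀}e_A, e_B) antisymmetric in A,B and ζ̄_A, g₀(∇̸_{L₀}e_A,e_B) bounded), and T is compactly supported with enough regularity, then Pol(T) = 0 everywhere. -/

import Mathlib

noncomputable section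

/-- Spacetime `ℝ × ℝ³` (the domain `[0,1] × ℝ³` sits inside it). -/
abbrev Spt : Type := ℝ × (Fin 3 → ℝ)

/-- A vector given by its four coordinate components, as a spacetime direction. -/
def iotaVec (v : Fin 4 → ℝ) : Spt := (v 0, fun i => v (Fin.succ i))

/-- Directional (coordinate) derivative of a scalar function along the vector field `X`. -/
def dirDeriv (X : Spt → Fin 4 → ℝ) (f : Spt → ℝ) (p : Spt) : ℝ :=
  fderiv ℝ f p (iotaVec (X p))

/-- Covariant derivative of a vector field `X` along `L`, with Christoffel symbols `Γ`:
`(D_L X)^α = L(X^α) + L^ρ Γ^α_{ρν} X^ν`. -/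
def covDerVec (Γ : Spt → Fin 4 → Fin 4 → Fin 4 → ℝ) (L X : Spt → Fin 4 → ℝ)
    (p : Spt) (α : Fin 4) : ℝ :=
  dirDeriv L (fun q => X q α) p + ∑ ρ, ∑ ν, L p ρ * Γ p α ρ ν * X p ν

/-- Covariant derivative of a 2-tensor `T` along `L`:
`(D_L T)_{αβ} = L(T_{αβ}) − L^ρΓ^ν_{ρα}T_{νβ} − L^ρΓ^ν_{ρβ}T_{αν}`. -/
def covDerTen (Γ : Spt → Fin 4 → Fin 4 → Fin 4 → ℝ) (L : Spt → Fin 4 → ℝ)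
    (T : Spt → Fin 4 → Fin 4 → ℝ) (p : Spt) (α β : Fin 4) : ℝ :=
  dirDeriv L (fun q => T q α β) p - (∑ ρ, ∑ ν, L p ρ * Γ p ν ρ α * T p ν β) -
    ∑ ρ, ∑ ν, L p ρ * Γ p ν ρ β * T p α ν

/-- Contraction `T(X,Y) = T_{αβ} X^α Y^β`. -/
def contract2 (T : Spt → Fin 4 → Fin 4 → ℝ) (X Y : Spt → Fin 4 → ℝ) (p : Spt) : ℝ :=
  ∑ α, ∑ β, T p α β * X p α * Y p β

/-- The transport operator `ℒ₀ T = −2 D_{L₀} T + (□_{g₀}u₀) T`. -/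
def transportOp (Γ : Spt → Fin 4 → Fin 4 → Fin 4 → ℝ) (L : Spt → Fin 4 → ℝ)
    (bbox : Spt → ℝ) (T : Spt → Fin 4 → Fin 4 → ℝ) : Spt → Fin 4 → Fin 4 → ℝ :=
  fun p α β => -2 * covDerTen Γ L T p α β + bbox p * T p α β

/-- Null-frame component `Pol_{L₀}(T) = −T_{L₀L₀}`. -/
def polLComp (L : Spt → Fin 4 → ℝ) (T : Spt → Fin 4 → Fin 4 → ℝ) (p : Spt) : ℝ :=
  -(contract2 T L L p)

/-- Null-frame component `Pol_A(T) = −T_{AL₀}`. -/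
def polAComp (eA L : Spt → Fin 4 → ℝ) (T : Spt → Fin 4 → Fin 4 → ℝ) (p : Spt) : ℝ :=
  -(contract2 T eA L p)

/-- Null-frame component `Pol_{L̄₀}(T) = −δ^{AB}T_{AB}`. -/
def polLbComp (e1 e2 : Spt → Fin 4 → ℝ) (T : Spt → Fin 4 → Fin 4 → ℝ) (p : Spt) : ℝ :=
  -(contract2 T e1 e1 p + contract2 T e2 e2 p)


/-!
Transport along the integral curves of `L₀`. Since `L₀⁰ ≥ c > 0`, the backward integral curve
through `(t, x)` reaches `Σ₀ = {t = 0}` within parameter time `t / c`. Along a curve the Christoffel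
symbols cancel in the Leibniz rule for `T(X, Y)`, so the structure equations and `Pol(ℒ₀ T) = 0`
turn the four components of `Pol(T)` into a solution of a linear system `y' = M(s) y` with bounded
coefficients. It vanishes where the curve meets `Σ₀`, hence, by Grönwall, at `(t, x)`.
-/

open Set Matrix Filter

lemma norm_iotaVec_le (v : Fin 4 → ℝ) : ‖iotaVec v‖ ≤ ‖v‖ :=
  max_le (norm_le_pi_norm v 0) ((pi_norm_le_iff_of_nonneg (norm_nonneg v)).2
    fun i => norm_le_pi_norm v i.succ)

lemma iotaVec_sub (v w : Fin 4 → ℝ) : iotaVec (v - w) = iotaVec v - iotaVec w := rfl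

lemma LipschitzWith.iotaVec_comp {α : Type*} [PseudoMetricSpace α] {K : NNReal}
    {F : α → Fin 4 → ℝ} (hF : LipschitzWith K F) : LipschitzWith K fun x => iotaVec (F x) :=
  LipschitzWith.of_dist_le_mul fun x y => by
    rw [dist_eq_norm, ← iotaVec_sub]
    exact (norm_iotaVec_le _).trans ((dist_eq_norm (F x) (F y)).symm.trans_le (hF.dist_le_mul x y))

lemma lipschitzWith_of_norm_fderiv_component_le {E ι : Type*} [NormedAddCommGroup E]
    [NormedSpace ℝ E] [Fintype ι] {F : E → ι → ℝ} {K : NNReal}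
    (hF : ∀ i, Differentiable ℝ fun x => F x i) (hF' : ∀ x i, ‖fderiv ℝ (fun x => F x i) x‖ ≤ K) :
    LipschitzWith K F := by
  refine LipschitzWith.of_dist_le_mul fun x y => (dist_pi_le_iff (by positivity)).2 fun i => ?_
  exact (lipschitzWith_of_nnnorm_fderiv_le (hF i) fun x => hF' x i).dist_le_mul x y

lemma exists_integralCurve_Icc_of_lipschitzWith {E : Type*} [NormedAddCommGroup E]
    [NormedSpace ℝ E] [CompleteSpace E] {V : E → E} {K M : NNReal} (hV : LipschitzWith K V)
    (hM : ∀ x, ‖V x‖ ≤ M) {tmin tmax : ℝ} (t₀ : Icc tmin tmax) (x₀ : E) :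
    ∃ γ : ℝ → E, γ t₀ = x₀ ∧
      ∀ t ∈ Icc tmin tmax, HasDerivWithinAt γ (V (γ t)) (Icc tmin tmax) t := by
  set τ : NNReal := ⟨max (tmax - t₀) (t₀ - tmin), le_max_of_le_left (sub_nonneg.2 t₀.2.2)⟩
  have hpl : IsPicardLindelof (fun _ => V) t₀ x₀ (M * τ) 0 M K :=
    .of_time_independent (fun x _ => hM x) hV.lipschitzOnWith
      (by rw [NNReal.coe_zero, sub_zero]; exact le_rfl)
  exact hpl.exists_eq_forall_mem_Icc_hasDerivWithinAt₀

lemma mul_sub_le_fst_sub_fst_of_integralCurve {L : Spt → Fin 4 → ℝ} {c : ℝ}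
    (hLt : ∀ p, c ≤ L p 0) {γ : ℝ → Spt} {a b : ℝ}
    (hγ : ∀ s ∈ Icc a b, HasDerivWithinAt γ (iotaVec (L (γ s))) (Icc a b) s) (hab : a ≤ b) :
    c * (b - a) ≤ (γ b).1 - (γ a).1 := by
  have hfst : ∀ s ∈ Icc a b, HasDerivWithinAt (fun s => (γ s).1) (L (γ s) 0) (Icc a b) s :=
    fun s hs => (hasFDerivAt_fst (p := γ s)).comp_hasDerivWithinAt s (hγ s hs)
  refine (convex_Icc a b).mul_sub_le_image_sub_of_le_deriv
    (fun s hs => (hfst s hs).continuousWithinAt) ?_ ?_ a (left_mem_Icc.2 hab) b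
    (right_mem_Icc.2 hab) hab
  · exact fun s hs => (hfst s (interior_subset hs)).differentiableWithinAt.mono interior_subset
  · intro s hs
    rw [interior_Icc] at hs
    rw [((hfst s (Ioo_subset_Icc_self hs)).hasDerivAt (Icc_mem_nhds hs.1 hs.2)).deriv]
    exact hLt (γ s)

lemma exists_integralCurve_through_initialSlice {L : Spt → Fin 4 → ℝ} {c : ℝ} {K : NNReal}
    (hc : 0 < c) (hL : ∀ α, Differentiable ℝ fun p => L p α)
    (hL' : ∀ p α, ‖fderiv ℝ (fun q => L q α) p‖ ≤ K) (hLbd : ∀ p α, |L p α| ≤ K)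
    (hLt : ∀ p, c ≤ L p 0) {t : ℝ} (ht : 0 ≤ t) (x : Fin 3 → ℝ) :
    ∃ γ : ℝ → Spt, ∃ s₀ ≤ 0, γ 0 = (t, x) ∧ (γ s₀).1 = 0 ∧
      ∀ s ∈ Icc s₀ 0, HasDerivWithinAt γ (iotaVec (L (γ s))) (Icc s₀ 0) s := by
  have hτ : -(t / c) ≤ 0 := neg_nonpos.2 (div_nonneg ht hc.le)
  obtain ⟨γ, hγ0 : γ 0 = (t, x), hγ⟩ := exists_integralCurve_Icc_of_lipschitzWith
    (lipschitzWith_of_norm_fderiv_component_le hL hL').iotaVec_comp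
    (fun p => (norm_iotaVec_le _).trans ((pi_norm_le_iff_of_nonneg K.2).2 fun α => hLbd p α))
    (⟨0, hτ, le_rfl⟩ : Icc (-(t / c)) 0) (t, x)
  have hrise : t ≤ t - (γ (-(t / c))).1 := by
    simpa [hc.ne', hγ0, mul_div_cancel₀] using mul_sub_le_fst_sub_fst_of_integralCurve hLt hγ hτ
  obtain ⟨s₀, hs₀, hγs₀⟩ : ∃ s₀ ∈ Icc (-(t / c)) 0, (γ s₀).1 = 0 :=
    intermediate_value_Icc hτ
      (continuous_fst.comp_continuousOn fun s hs => (hγ s hs).continuousWithinAt)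
      ⟨by simp only [Function.comp_apply]; linarith, by simpa [hγ0] using ht⟩
  have hsub : Icc s₀ 0 ⊆ Icc (-(t / c)) 0 := Icc_subset_Icc_left hs₀.1
  exact ⟨γ, s₀, hs₀.2, hγ0, hγs₀, fun s hs => (hγ s (hsub hs)).mono hsub⟩

lemma norm_mulVec_le_of_abs_le {n : Type*} [Fintype n] {M : Matrix n n ℝ} {C : ℝ}
    (hM : ∀ i j, |M i j| ≤ C) (v : n → ℝ) : ‖M *ᵥ v‖ ≤ Fintype.card n * C * ‖v‖ := by
  rcases isEmpty_or_nonempty n with hn | ⟨⟨i₀⟩⟩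
  · simp [Subsingleton.elim v 0]
  have hC : 0 ≤ C := (abs_nonneg _).trans (hM i₀ i₀)
  refine (pi_norm_le_iff_of_nonneg (by positivity)).2 fun i => ?_
  calc ‖(M *ᵥ v) i‖ = |∑ j, M i j * v j| := rfl
    _ ≤ ∑ j, |M i j| * |v j| := by
        simpa only [abs_mul] using Finset.abs_sum_le_sum_abs (fun j => M i j * v j) Finset.univ
    _ ≤ ∑ _j : n, C * ‖v‖ := Finset.sum_le_sum fun j _ =>
        mul_le_mul (hM i j) (norm_le_pi_norm v j) (abs_nonneg _) hC
    _ = Fintype.card n * C * ‖v‖ := by simp [mul_assoc]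

lemma eqOn_zero_of_hasDerivWithinAt_mulVec {n : Type*} [Fintype n] {M : ℝ → Matrix n n ℝ}
    {C a b : ℝ} (hM : ∀ s ∈ Icc a b, ∀ i j, |M s i j| ≤ C) {y : ℝ → n → ℝ}
    (hy : ∀ s ∈ Icc a b, HasDerivWithinAt y (M s *ᵥ y s) (Icc a b) s) (ha : y a = 0) :
    EqOn y 0 (Icc a b) :=
  eq_zero_of_abs_deriv_le_mul_abs_self_of_eq_zero_right
    (fun s hs => (hy s hs).continuousWithinAt)
    (fun s hs => (hy s (Ico_subset_Icc_self hs)).mono_of_mem_nhdsWithin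
      (mem_of_superset (Icc_mem_nhdsGE hs.2) (Icc_subset_Icc_left hs.1)))
    ha (fun s hs => norm_mulVec_le_of_abs_le (hM s (Ico_subset_Icc_self hs)) (y s))

section Contraction

variable {T : Spt → Fin 4 → Fin 4 → ℝ} {X Y Z : Spt → Fin 4 → ℝ} {p : Spt}

lemma contract2_comm (hT : ∀ α β, T p α β = T p β α) : contract2 T X Y p = contract2 T Y X p := by
  simp only [contract2, Fin.sum_univ_four, hT 1 0, hT 2 0, hT 3 0, hT 2 1, hT 3 1, hT 3 2]
  ring

lemma contract2_eq_zero_left (hX : ∀ α, X p α = 0) : contract2 T X Y p = 0 := by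
  simp [contract2, hX]

lemma contract2_eq_zero_right (hY : ∀ β, Y p β = 0) : contract2 T X Y p = 0 := by
  simp [contract2, hY]

lemma contract2_eq_add_left {W : Spt → Fin 4 → ℝ} {a b : ℝ}
    (hX : ∀ α, X p α = a * Y p α + b * Z p α) :
    contract2 T X W p = a * contract2 T Y W p + b * contract2 T Z W p := by
  simp only [contract2, hX, Fin.sum_univ_four]
  ring

lemma contract2_transportOp (Γ : Spt → Fin 4 → Fin 4 → Fin 4 → ℝ) (L : Spt → Fin 4 → ℝ)
    (bbox : Spt → ℝ) :
    contract2 (transportOp Γ L bbox T) X Y p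
      = -2 * contract2 (covDerTen Γ L T) X Y p + bbox p * contract2 T X Y p := by
  simp only [contract2, transportOp, Fin.sum_univ_four]
  ring

lemma contract2_covDerTen_add_covDerVec (Γ : Spt → Fin 4 → Fin 4 → Fin 4 → ℝ)
    (L : Spt → Fin 4 → ℝ) :
    contract2 (covDerTen Γ L T) X Y p + contract2 T (covDerVec Γ L X) Y p
        + contract2 T X (covDerVec Γ L Y) p
      = ∑ α, ∑ β, (dirDeriv L (fun q => T q α β) p * X p α * Y p β
          + T p α β * dirDeriv L (fun q => X q α) p * Y p β
          + T p α β * X p α * dirDeriv L (fun q => Y q β) p) := by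
  simp only [contract2, covDerTen, covDerVec, Fin.sum_univ_four]
  ring

end Contraction

def polVec (L e1 e2 : Spt → Fin 4 → ℝ) (T : Spt → Fin 4 → Fin 4 → ℝ) (p : Spt) : Fin 4 → ℝ :=
  ![polLComp L T p, polAComp e1 L T p, polAComp e2 L T p, polLbComp e1 e2 T p]

lemma polVec_eq_zero_iff {L e1 e2 : Spt → Fin 4 → ℝ} {T : Spt → Fin 4 → Fin 4 → ℝ} {p : Spt} :
    polVec L e1 e2 T p = 0 ↔ polLComp L T p = 0 ∧ polAComp e1 L T p = 0 ∧
      polAComp e2 L T p = 0 ∧ polLbComp e1 e2 T p = 0 := by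
  simp [polVec, Matrix.cons_eq_zero_iff]

/-- The paper's transport system for `Pol(T)`, divided by `−2` (as `ℒ₀ = −2 D_{L₀} + □u₀`);
`ω` stands for `g₀(∇̸_{L₀}e₁, e₂)`. -/
def transportMatrix (b ζ1 ζ2 ω : ℝ) : Matrix (Fin 4) (Fin 4) ℝ :=
  !![b / 2, 0, 0, 0;
     ζ1, b / 2, ω, 0;
     ζ2, -ω, b / 2, 0;
     0, 2 * ζ1, 2 * ζ2, b / 2]

lemma abs_transportMatrix_le {b ζ1 ζ2 ω B : ℝ} (hb : |b| ≤ B) (hζ1 : |ζ1| ≤ B) (hζ2 : |ζ2| ≤ B)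
    (hω : |ω| ≤ B) (i j : Fin 4) : |transportMatrix b ζ1 ζ2 ω i j| ≤ 2 * B := by
  have hB : 0 ≤ B := (abs_nonneg b).trans hb
  fin_cases i <;> fin_cases j <;>
    simp [transportMatrix, abs_mul, abs_div] <;> linarith

section AlongIntegralCurve

variable (Γ : Spt → Fin 4 → Fin 4 → Fin 4 → ℝ) {L : Spt → Fin 4 → ℝ}
  {T : Spt → Fin 4 → Fin 4 → ℝ} {bbox : Spt → ℝ} {γ : ℝ → Spt} {S : Set ℝ} {s : ℝ}

lemma hasDerivWithinAt_comp_integralCurve {g : Spt → ℝ} (hg : DifferentiableAt ℝ g (γ s))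
    (hγ : HasDerivWithinAt γ (iotaVec (L (γ s))) S s) :
    HasDerivWithinAt (fun s => g (γ s)) (dirDeriv L g (γ s)) S s :=
  hg.hasFDerivAt.comp_hasDerivWithinAt s hγ

lemma hasDerivWithinAt_contract2_comp {X Y : Spt → Fin 4 → ℝ}
    (hγ : HasDerivWithinAt γ (iotaVec (L (γ s))) S s)
    (hT : ∀ α β, DifferentiableAt ℝ (fun q => T q α β) (γ s))
    (hX : ∀ α, DifferentiableAt ℝ (fun q => X q α) (γ s))
    (hY : ∀ β, DifferentiableAt ℝ (fun q => Y q β) (γ s)) :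
    HasDerivWithinAt (fun s => contract2 T X Y (γ s))
      (contract2 (covDerTen Γ L T) X Y (γ s) + contract2 T (covDerVec Γ L X) Y (γ s)
        + contract2 T X (covDerVec Γ L Y) (γ s)) S s := by
  rw [contract2_covDerTen_add_covDerVec]
  refine HasDerivWithinAt.fun_sum fun α _ => HasDerivWithinAt.fun_sum fun β _ => ?_
  refine (((hasDerivWithinAt_comp_integralCurve (hT α β) hγ).fun_mul
    (hasDerivWithinAt_comp_integralCurve (hX α) hγ)).fun_mul
    (hasDerivWithinAt_comp_integralCurve (hY β) hγ)).congr_deriv ?_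
  ring

lemma hasDerivWithinAt_polLComp_comp
    (hγ : HasDerivWithinAt γ (iotaVec (L (γ s))) S s)
    (hT : ∀ α β, DifferentiableAt ℝ (fun q => T q α β) (γ s))
    (hL : ∀ α, DifferentiableAt ℝ (fun q => L q α) (γ s))
    (hgeo : ∀ α, covDerVec Γ L L (γ s) α = 0)
    (hPol : polLComp L (transportOp Γ L bbox T) (γ s) = 0) :
    HasDerivWithinAt (fun s => polLComp L T (γ s)) (bbox (γ s) / 2 * polLComp L T (γ s)) S s := by
  refine (hasDerivWithinAt_contract2_comp Γ hγ hT hL hL).neg.congr_deriv ?_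
  rw [polLComp, contract2_transportOp] at hPol
  rw [polLComp, contract2_eq_zero_left hgeo, contract2_eq_zero_right hgeo]
  linarith

lemma hasDerivWithinAt_polAComp_comp {eA eB : Spt → Fin 4 → ℝ} {ζ ω : ℝ}
    (hγ : HasDerivWithinAt γ (iotaVec (L (γ s))) S s)
    (hT : ∀ α β, DifferentiableAt ℝ (fun q => T q α β) (γ s))
    (hL : ∀ α, DifferentiableAt ℝ (fun q => L q α) (γ s))
    (hgeo : ∀ α, covDerVec Γ L L (γ s) α = 0)
    (heA : ∀ α, DifferentiableAt ℝ (fun q => eA q α) (γ s))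
    (hDe : ∀ α, covDerVec Γ L eA (γ s) α = ζ * L (γ s) α + ω * eB (γ s) α)
    (hPol : polAComp eA L (transportOp Γ L bbox T) (γ s) = 0) :
    HasDerivWithinAt (fun s => polAComp eA L T (γ s))
      (bbox (γ s) / 2 * polAComp eA L T (γ s) + ζ * polLComp L T (γ s)
        + ω * polAComp eB L T (γ s)) S s := by
  refine (hasDerivWithinAt_contract2_comp Γ hγ hT heA hL).neg.congr_deriv ?_
  rw [polAComp, contract2_transportOp] at hPol
  rw [polAComp, polAComp, polLComp, contract2_eq_add_left hDe, contract2_eq_zero_right hgeo]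
  linarith

lemma hasDerivWithinAt_polLbComp_comp {e1 e2 : Spt → Fin 4 → ℝ} {ζ1 ζ2 ω : ℝ}
    (hγ : HasDerivWithinAt γ (iotaVec (L (γ s))) S s)
    (hT : ∀ α β, DifferentiableAt ℝ (fun q => T q α β) (γ s))
    (hTsym : ∀ α β, T (γ s) α β = T (γ s) β α)
    (he1 : ∀ α, DifferentiableAt ℝ (fun q => e1 q α) (γ s))
    (he2 : ∀ α, DifferentiableAt ℝ (fun q => e2 q α) (γ s))
    (hDe1 : ∀ α, covDerVec Γ L e1 (γ s) α = ζ1 * L (γ s) α + ω * e2 (γ s) α)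
    (hDe2 : ∀ α, covDerVec Γ L e2 (γ s) α = ζ2 * L (γ s) α - ω * e1 (γ s) α)
    (hPol : polLbComp e1 e2 (transportOp Γ L bbox T) (γ s) = 0) :
    HasDerivWithinAt (fun s => polLbComp e1 e2 T (γ s))
      (bbox (γ s) / 2 * polLbComp e1 e2 T (γ s) + 2 * ζ1 * polAComp e1 L T (γ s)
        + 2 * ζ2 * polAComp e2 L T (γ s)) S s := by
  refine ((hasDerivWithinAt_contract2_comp Γ hγ hT he1 he1).add
    (hasDerivWithinAt_contract2_comp Γ hγ hT he2 he2)).neg.congr_deriv ?_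
  rw [polLbComp, contract2_transportOp, contract2_transportOp] at hPol
  have hD1 : contract2 T (covDerVec Γ L e1) e1 (γ s)
      = ζ1 * contract2 T e1 L (γ s) + ω * contract2 T e1 e2 (γ s) := by
    rw [contract2_eq_add_left hDe1, contract2_comm hTsym (X := L), contract2_comm hTsym (X := e2)]
  have hD2 : contract2 T (covDerVec Γ L e2) e2 (γ s)
      = ζ2 * contract2 T e2 L (γ s) - ω * contract2 T e1 e2 (γ s) := by
    rw [contract2_eq_add_left (Y := L) (Z := e1) (b := -ω) fun α => (hDe2 α).trans (by ring),
      contract2_comm hTsym (X := L)]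
    ring
  rw [polLbComp, polAComp, polAComp, contract2_comm hTsym (X := e1) (Y := covDerVec Γ L e1),
    contract2_comm hTsym (X := e2) (Y := covDerVec Γ L e2)]
  linarith

lemma hasDerivWithinAt_polVec_comp {e1 e2 : Spt → Fin 4 → ℝ} {ζ1 ζ2 ω : ℝ}
    (hγ : HasDerivWithinAt γ (iotaVec (L (γ s))) S s)
    (hT : ∀ α β, DifferentiableAt ℝ (fun q => T q α β) (γ s))
    (hTsym : ∀ α β, T (γ s) α β = T (γ s) β α)
    (hL : ∀ α, DifferentiableAt ℝ (fun q => L q α) (γ s))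
    (he1 : ∀ α, DifferentiableAt ℝ (fun q => e1 q α) (γ s))
    (he2 : ∀ α, DifferentiableAt ℝ (fun q => e2 q α) (γ s))
    (hgeo : ∀ α, covDerVec Γ L L (γ s) α = 0)
    (hDe1 : ∀ α, covDerVec Γ L e1 (γ s) α = ζ1 * L (γ s) α + ω * e2 (γ s) α)
    (hDe2 : ∀ α, covDerVec Γ L e2 (γ s) α = ζ2 * L (γ s) α - ω * e1 (γ s) α)
    (hPol : polVec L e1 e2 (transportOp Γ L bbox T) (γ s) = 0) :
    HasDerivWithinAt (fun s => polVec L e1 e2 T (γ s))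
      (transportMatrix (bbox (γ s)) ζ1 ζ2 ω *ᵥ polVec L e1 e2 T (γ s)) S s := by
  obtain ⟨hPolL, hPol1, hPol2, hPolLb⟩ := polVec_eq_zero_iff.1 hPol
  refine hasDerivWithinAt_pi.2 fun i => ?_
  fin_cases i
  · refine (hasDerivWithinAt_polLComp_comp Γ hγ hT hL hgeo hPolL).congr_deriv ?_
    simp [transportMatrix, polVec, mulVec, dotProduct, Fin.sum_univ_four]
  · refine (hasDerivWithinAt_polAComp_comp Γ hγ hT hL hgeo he1 hDe1 hPol1).congr_deriv ?_
    simp [transportMatrix, polVec, mulVec, dotProduct, Fin.sum_univ_four]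
    ring
  · refine (hasDerivWithinAt_polAComp_comp (ζ := ζ2) (ω := -ω) (eB := e1) Γ hγ hT hL hgeo he2
      (fun α => (hDe2 α).trans (by ring)) hPol2).congr_deriv ?_
    simp [transportMatrix, polVec, mulVec, dotProduct, Fin.sum_univ_four]
    ring
  · refine (hasDerivWithinAt_polLbComp_comp Γ hγ hT hTsym he1 he2 hDe1 hDe2 hPolLb).congr_deriv ?_
    simp [transportMatrix, polVec, mulVec, dotProduct, Fin.sum_univ_four]
    ring

end AlongIntegralCurve

theorem stmt_17_general (c B : ℝ) (hc : 0 < c) (hB : 0 < B)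
    (Γ : Spt → Fin 4 → Fin 4 → Fin 4 → ℝ)
    (L Lb e1 e2 : Spt → Fin 4 → ℝ)
    (ζ1 ζ2 ω bbox : Spt → ℝ)
    (T : Spt → Fin 4 → Fin 4 → ℝ)
    (hLreg : ∀ α, ContDiff ℝ 1 fun p => L p α)
    (he1reg : ∀ α, ContDiff ℝ 1 fun p => e1 p α)
    (he2reg : ∀ α, ContDiff ℝ 1 fun p => e2 p α)
    (hLbd : ∀ p α, |L p α| ≤ B ∧ |Lb p α| ≤ B ∧ |e1 p α| ≤ B ∧ |e2 p α| ≤ B)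
    (hLt : ∀ p, c ≤ L p 0)
    (hLder : ∀ p α, ‖fderiv ℝ (fun q => L q α) p‖ ≤ B)
    (hcoefbd : ∀ p, |ζ1 p| ≤ B ∧ |ζ2 p| ≤ B ∧ |ω p| ≤ B ∧ |bbox p| ≤ B)
    (hgeo : ∀ p α, covDerVec Γ L L p α = 0)
    (hDe1 : ∀ p α, covDerVec Γ L e1 p α = ζ1 p * L p α + ω p * e2 p α)
    (hDe2 : ∀ p α, covDerVec Γ L e2 p α = ζ2 p * L p α - ω p * e1 p α)
    (hTreg : ∀ α β, ContDiff ℝ 1 fun p => T p α β)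
    (hTsym : ∀ p α β, T p α β = T p β α)
    (hPol0 : ∀ x : Fin 3 → ℝ,
      polLComp L T (0, x) = 0 ∧ polAComp e1 L T (0, x) = 0 ∧
        polAComp e2 L T (0, x) = 0 ∧ polLbComp e1 e2 T (0, x) = 0)
    (hPolTrans : ∀ p : Spt,
      polLComp L (transportOp Γ L bbox T) p = 0 ∧
        polAComp e1 L (transportOp Γ L bbox T) p = 0 ∧
        polAComp e2 L (transportOp Γ L bbox T) p = 0 ∧
        polLbComp e1 e2 (transportOp Γ L bbox T) p = 0) :
    ∀ t ∈ Set.Icc (0 : ℝ) 1, ∀ x : Fin 3 → ℝ,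
      polLComp L T (t, x) = 0 ∧ polAComp e1 L T (t, x) = 0 ∧
        polAComp e2 L T (t, x) = 0 ∧ polLbComp e1 e2 T (t, x) = 0 := by
  intro t ht x
  obtain ⟨γ, s₀, hs₀, hγ0, hγs₀, hγ⟩ := exists_integralCurve_through_initialSlice
    (K := ⟨B, hB.le⟩) hc (fun α => (hLreg α).differentiable one_ne_zero) hLder
    (fun p α => (hLbd p α).1) hLt ht.1 x
  have hpol := eqOn_zero_of_hasDerivWithinAt_mulVec
    (M := fun s => transportMatrix (bbox (γ s)) (ζ1 (γ s)) (ζ2 (γ s)) (ω (γ s)))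
    (fun s _ => abs_transportMatrix_le (hcoefbd _).2.2.2 (hcoefbd _).1 (hcoefbd _).2.1
      (hcoefbd _).2.2.1)
    (fun s hs => hasDerivWithinAt_polVec_comp Γ (hγ s hs)
      (fun α β => (hTreg α β).differentiable one_ne_zero _) (hTsym _)
      (fun α => (hLreg α).differentiable one_ne_zero _)
      (fun α => (he1reg α).differentiable one_ne_zero _)
      (fun α => (he2reg α).differentiable one_ne_zero _)
      (hgeo _) (hDe1 _) (hDe2 _) (polVec_eq_zero_iff.2 (hPolTrans _)))
    (by rw [show γ s₀ = (0, (γ s₀).2) from Prod.ext hγs₀ rfl]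
        exact polVec_eq_zero_iff.2 (hPol0 _))
  simpa [hγ0] using polVec_eq_zero_iff.1 (hpol ⟨hs₀, le_rfl⟩)

/-- Propagation of polarization: if `T` is a symmetric 2-tensor with `Pol(T) = 0` on `Σ₀`
and `Pol(ℒ₀ T) = 0` everywhere, where `ℒ₀ = −2D_{L₀} + □_{g₀}u₀`, and the background null
frame satisfies the structure equations `D_{L₀}L₀ = 0`, `D_{L₀}L̄₀ = 2ζ̄_A e_A`,
`D_{L₀}e_A = ζ̄_A L₀ + ∇̸_{L₀}e_A` (with `g₀(∇̸_{L₀}e_A,e_B)` antisymmetric and bounded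
coefficients), and `T` is compactly supported with enough regularity, then
`Pol(T) = 0` on `[0,1] × ℝ³`. -/
theorem stmt_17 (c B : ℝ) (hc : 0 < c) (hB : 0 < B)
    (Γ : Spt → Fin 4 → Fin 4 → Fin 4 → ℝ)
    (L Lb e1 e2 : Spt → Fin 4 → ℝ)
    (ζ1 ζ2 ω bbox : Spt → ℝ)
    (T : Spt → Fin 4 → Fin 4 → ℝ)
    (hΓcont : ∀ α ρ ν, Continuous fun p => Γ p α ρ ν)
    (hΓbd : ∀ p α ρ ν, |Γ p α ρ ν| ≤ B)
    (hLreg : ∀ α, ContDiff ℝ 1 fun p => L p α)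
    (hLbreg : ∀ α, ContDiff ℝ 1 fun p => Lb p α)
    (he1reg : ∀ α, ContDiff ℝ 1 fun p => e1 p α)
    (he2reg : ∀ α, ContDiff ℝ 1 fun p => e2 p α)
    (hLbd : ∀ p α, |L p α| ≤ B ∧ |Lb p α| ≤ B ∧ |e1 p α| ≤ B ∧ |e2 p α| ≤ B)
    (hLt : ∀ p, c ≤ L p 0)
    (hLder : ∀ p α, ‖fderiv ℝ (fun q => L q α) p‖ ≤ B)
    (hcoefcont : Continuous ζ1 ∧ Continuous ζ2 ∧ Continuous ω ∧ Continuous bbox)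
    (hcoefbd : ∀ p, |ζ1 p| ≤ B ∧ |ζ2 p| ≤ B ∧ |ω p| ≤ B ∧ |bbox p| ≤ B)
    (hgeo : ∀ p α, covDerVec Γ L L p α = 0)
    (hDLb : ∀ p α, covDerVec Γ L Lb p α = 2 * (ζ1 p * e1 p α + ζ2 p * e2 p α))
    (hDe1 : ∀ p α, covDerVec Γ L e1 p α = ζ1 p * L p α + ω p * e2 p α)
    (hDe2 : ∀ p α, covDerVec Γ L e2 p α = ζ2 p * L p α - ω p * e1 p α)
    (hTreg : ∀ α β, ContDiff ℝ 1 fun p => T p α β)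
    (hTsym : ∀ p α β, T p α β = T p β α)
    (hTsupp : ∃ R : ℝ, ∀ (t : ℝ) (x : Fin 3 → ℝ) (α β : Fin 4),
      R < ‖x‖ → T (t, x) α β = 0)
    (hPol0 : ∀ x : Fin 3 → ℝ,
      polLComp L T (0, x) = 0 ∧ polAComp e1 L T (0, x) = 0 ∧
        polAComp e2 L T (0, x) = 0 ∧ polLbComp e1 e2 T (0, x) = 0)
    (hPolTrans : ∀ p : Spt,
      polLComp L (transportOp Γ L bbox T) p = 0 ∧
        polAComp e1 L (transportOp Γ L bbox T) p = 0 ∧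
        polAComp e2 L (transportOp Γ L bbox T) p = 0 ∧
        polLbComp e1 e2 (transportOp Γ L bbox T) p = 0) :
    ∀ t ∈ Set.Icc (0 : ℝ) 1, ∀ x : Fin 3 → ℝ,
      polLComp L T (t, x) = 0 ∧ polAComp e1 L T (t, x) = 0 ∧
        polAComp e2 L T (t, x) = 0 ∧ polLbComp e1 e2 T (t, x) = 0 :=
  stmt_17_general c B hc hB Γ L Lb e1 e2 ζ1 ζ2 ω bbox T hLreg he1reg he2reg hLbd hLt hLder hcoefbd
    hgeo hDe1 hDe2 hTreg hTsym hPol0 hPolTrans
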